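/- Let θ : ℂ[w₀,…,w₁₃] → ℂ[x₀,x₁,y₀,y₁,z₀,z₁] be the ℂ-algebra homomorphism with w₀ ↦ x₀²y₀²z₀², w₁ ↦ x₀²y₀²z₁², w₂ ↦ x₀²y₀y₁z₀z₁, w₃ ↦ x₀²y₁²z₀², w₄ ↦ x₀²y₁²z₁², w₅ ↦ x₀x₁y₀²z₀z₁, w₆ ↦ x₀x₁y₀y₁z₀², w₇ ↦ x₀x₁y₀y₁z₁², w₈ ↦ x₀x₁y₁²z₀z₁, w₉ ↦ x₁²y₀²z₀², w₁₀ ↦ x₁²y₀²z₁², w₁₁ ↦ x₁²y₀y₁z₀z₁, w₁₂ ↦ x₁²y₁²z₀², w₁₃ ↦ x₁²y₁²z₁². Let e₀,…,e₁₃ be the standard basis of ℂ¹⁴, and set P₁=e₄, P₂=e₀, P₃=e₁₀, P₄=e₁₂, P₁′=e₉, P₂′=e₁₃, P₃′=e₃, P₄′=e₁. Then: (a) for each of the 12 pairs (P₁,P₂′), (P₁,P₃′), (P₁,P₄′), (P₂,P₁′), (P₂,P₃′), (P₂,P₄′), (P₃,P₁′), (P₃,P₂′), (P₃,P₄′), (P₄,P₁′),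 (P₄,P₂′), (P₄,P₃′), every f ∈ ker θ and all s,t ∈ ℂ satisfy f(s·P + t·Q) = 0; (b) for every other pair of distinct points among {P₁,P₂,P₃,P₄,P₁′,P₂′,P₃′,P₄′} there exist f ∈ ker θ and s,t ∈ ℂ with f(s·P + t·Q) ≠ 0. -/

import Mathlib

set_option maxHeartbeats 1000000

open MvPolynomial

/-- The ℂ-algebra homomorphism θ : ℂ[w₀,…,w₁₃] → ℂ[x₀,x₁,y₀,y₁,z₀,z₁]
(variables `X 0,X 1` = x₀,x₁; `X 2,X 3` = y₀,y₁; `X 4,X 5` = z₀,z₁) determined by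
w₀ ↦ x₀²y₀²z₀², w₁ ↦ x₀²y₀²z₁², w₂ ↦ x₀²y₀y₁z₀z₁, w₃ ↦ x₀²y₁²z₀², w₄ ↦ x₀²y₁²z₁²,
w₅ ↦ x₀x₁y₀²z₀z₁, w₆ ↦ x₀x₁y₀y₁z₀², w₇ ↦ x₀x₁y₀y₁z₁², w₈ ↦ x₀x₁y₁²z₀z₁,
w₉ ↦ x₁²y₀²z₀², w₁₀ ↦ x₁²y₀²z₁², w₁₁ ↦ x₁²y₀y₁z₀z₁, w₁₂ ↦ x₁²y₁²z₀², w₁₃ ↦ x₁²y₁²z₁². -/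
noncomputable def theta : MvPolynomial (Fin 14) ℂ →ₐ[ℂ] MvPolynomial (Fin 6) ℂ :=
  aeval ![X 0 ^ 2 * X 2 ^ 2 * X 4 ^ 2, X 0 ^ 2 * X 2 ^ 2 * X 5 ^ 2,
    X 0 ^ 2 * X 2 * X 3 * X 4 * X 5, X 0 ^ 2 * X 3 ^ 2 * X 4 ^ 2,
    X 0 ^ 2 * X 3 ^ 2 * X 5 ^ 2, X 0 * X 1 * X 2 ^ 2 * X 4 * X 5,
    X 0 * X 1 * X 2 * X 3 * X 4 ^ 2, X 0 * X 1 * X 2 * X 3 * X 5 ^ 2,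
    X 0 * X 1 * X 3 ^ 2 * X 4 * X 5, X 1 ^ 2 * X 2 ^ 2 * X 4 ^ 2,
    X 1 ^ 2 * X 2 ^ 2 * X 5 ^ 2, X 1 ^ 2 * X 2 * X 3 * X 4 * X 5,
    X 1 ^ 2 * X 3 ^ 2 * X 4 ^ 2, X 1 ^ 2 * X 3 ^ 2 * X 5 ^ 2]

/-- The standard basis vectors of ℂ¹⁴. The eight singular points of W_{BS}¹³ are
P₁ = e₄, P₂ = e₀, P₃ = e₁₀, P₄ = e₁₂, P₁′ = e₉, P₂′ = e₁₃, P₃′ = e₃, P₄′ = e₁. -/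
noncomputable def e : Fin 14 → Fin 14 → ℂ := fun i => Pi.single i 1

/-- The indices of the eight singular points of W_{BS}¹³ among the coordinate
points of ℂ¹⁴. -/
def singIdx : Set (Fin 14) := {4, 0, 10, 12, 9, 13, 3, 1}

/-- The (symmetrized) set of index pairs corresponding to the 12 pairs
(P₁,P₂′), (P₁,P₃′), (P₁,P₄′), (P₂,P₁′), (P₂,P₃′), (P₂,P₄′), (P₃,P₁′), (P₃,P₂′),
(P₃,P₄′), (P₄,P₁′), (P₄,P₂′), (P₄,P₃′). -/
def assocPairs : Set (Fin 14 × Fin 14) :=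
  {(4, 13), (4, 3), (4, 1), (0, 9), (0, 3), (0, 1),
   (10, 9), (10, 13), (10, 1), (12, 9), (12, 13), (12, 3),
   (13, 4), (3, 4), (1, 4), (9, 0), (3, 0), (1, 0),
   (9, 10), (13, 10), (1, 10), (9, 12), (13, 12), (3, 12)}

/-! θ is a monomial map: θ(w_k) = x₀^(2-p) x₁^p y₀^(2-q) y₁^q z₀^(2-r) z₁^r, where (p, q, r) runs
over the 14 lattice points of the cube [0,2]³ with even coordinate sum. The eight singular points
are the vertices of the cube, and the associated pairs are exactly its edges.

An edge contains no further lattice point, so its line s·e_u + t·e_v is the image under θ of a point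
of (ℂ²)³ built from square roots of s and t; hence every f ∈ ker θ vanishes on it. A face or space
diagonal u v satisfies u + v = a + b for lattice points a, b off it (the face centre twice, or
(0,1,1) + (2,1,1) = (2,2,2) for a space diagonal), and then w_u w_v - w_a w_b ∈ ker θ takes the
value 1 at e_u + e_v. -/

theorem eval_eq_zero_of_mem_ker {R σ τ : Type*} [CommSemiring R]
    {φ : MvPolynomial σ R →ₐ[R] MvPolynomial τ R} {f : MvPolynomial σ R}
    (hf : f ∈ RingHom.ker φ) (g : τ → R) :
    eval (fun k => eval g (φ (X k))) f = 0 := by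
  have h := congrArg (fun ψ : MvPolynomial σ R →ₐ[R] R => ψ f) (aeval_unique ((aeval g).comp φ))
  simp only [AlgHom.comp_apply, RingHom.mem_ker.mp hf, map_zero] at h
  exact (h.trans rfl).symm

theorem eval_single_add_single_X_mul_X_sub {R σ : Type*} [CommRing R] [DecidableEq σ]
    {i j a b : σ} (hij : i ≠ j) (hai : a ≠ i) (haj : a ≠ j) (hbi : b ≠ i) (hbj : b ≠ j) :
    eval (Pi.single i 1 + Pi.single j 1) (X i * X j - X a * X b : MvPolynomial σ R) = 1 := by
  simp [hij, hij.symm, hai, haj, hbi, hbj]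

def thetaExp : Fin 14 → Fin 6 → ℕ :=
  ![![2, 0, 2, 0, 2, 0], ![2, 0, 2, 0, 0, 2], ![2, 0, 1, 1, 1, 1], ![2, 0, 0, 2, 2, 0],
    ![2, 0, 0, 2, 0, 2], ![1, 1, 2, 0, 1, 1], ![1, 1, 1, 1, 2, 0], ![1, 1, 1, 1, 0, 2],
    ![1, 1, 0, 2, 1, 1], ![0, 2, 2, 0, 2, 0], ![0, 2, 2, 0, 0, 2], ![0, 2, 1, 1, 1, 1],
    ![0, 2, 0, 2, 2, 0], ![0, 2, 0, 2, 0, 2]]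

theorem theta_X (k : Fin 14) : theta (X k) = ∏ l, X l ^ thetaExp k l := by
  fin_cases k <;> simp [theta, thetaExp, Fin.prod_univ_six]

theorem X_mul_X_sub_mem_ker_theta {i j a b : Fin 14}
    (h : thetaExp i + thetaExp j = thetaExp a + thetaExp b) :
    X i * X j - X a * X b ∈ RingHom.ker theta := by
  rw [RingHom.mem_ker, map_sub, sub_eq_zero, map_mul, map_mul]
  simp only [theta_X, ← Finset.prod_mul_distrib, ← pow_add]
  exact Finset.prod_congr rfl fun l _ => congrArg (X l ^ ·) (congrFun h l)

-- On an edge from `u` to `v` the two fixed factors pick out the common coordinates of the two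
-- vertices, and the moving factor ℙ¹ carries `(a, b)` or `(b, a)`.
def edgePoint (u v : Fin 6 → ℕ) (a b : ℂ) : Fin 6 → ℂ := fun l =>
  if u l = 2 then (if v l = 2 then 1 else a) else (if v l = 2 then b else 0)

theorem eval_theta_X_edgePoint {p : Fin 14 × Fin 14} (hp : p ∈ assocPairs) (a b : ℂ) :
    (fun k => eval (edgePoint (thetaExp p.1) (thetaExp p.2) a b) (theta (X k))) =
      a ^ 2 • e p.1 + b ^ 2 • e p.2 := by
  simp only [assocPairs, Set.mem_insert_iff, Set.mem_singleton_iff] at hp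
  funext k
  rcases hp with rfl|rfl|rfl|rfl|rfl|rfl|rfl|rfl|rfl|rfl|rfl|rfl|
    rfl|rfl|rfl|rfl|rfl|rfl|rfl|rfl|rfl|rfl|rfl|rfl <;>
    fin_cases k <;> simp [theta_X, edgePoint, thetaExp, Fin.prod_univ_six, e]

set_option synthInstance.maxSize 100000 in
set_option synthInstance.maxHeartbeats 400000 in
theorem exists_thetaExp_add_eq_of_not_mem_assocPairs :
    ∀ i ∈ singIdx, ∀ j ∈ singIdx, i ≠ j → (i, j) ∉ assocPairs →
      ∃ a b : Fin 14, a ≠ i ∧ a ≠ j ∧ b ≠ i ∧ b ≠ j ∧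
        thetaExp i + thetaExp j = thetaExp a + thetaExp b := by
  simp only [singIdx, assocPairs, Set.mem_insert_iff, Set.mem_singleton_iff]
  decide

/-- Configuration of the eight singular points of W_{BS}¹³:
(a) for each of the 12 listed pairs, the line joining the two coordinate points lies
on W_{BS}¹³ (every f ∈ ker θ vanishes on it);
(b) for every other pair of distinct singular points the joining line does not lie
on W_{BS}¹³. -/
theorem configuration_of_singular_points_of_WBS13 :
    (∀ p ∈ assocPairs, ∀ f ∈ RingHom.ker theta, ∀ s t : ℂ,
      eval (s • e p.1 + t • e p.2) f = 0) ∧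
    (∀ i ∈ singIdx, ∀ j ∈ singIdx, i ≠ j → (i, j) ∉ assocPairs →
      ∃ f ∈ RingHom.ker theta, ∃ s t : ℂ, eval (s • e i + t • e j) f ≠ 0) := by
  constructor
  · intro p hp f hf s t
    obtain ⟨a, rfl⟩ := IsAlgClosed.exists_pow_nat_eq s two_pos
    obtain ⟨b, rfl⟩ := IsAlgClosed.exists_pow_nat_eq t two_pos
    rw [← eval_theta_X_edgePoint hp a b]
    exact eval_eq_zero_of_mem_ker hf _
  · intro i hi j hj hij hij'
    obtain ⟨a, b, hai, haj, hbi, hbj, hexp⟩ :=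
      exists_thetaExp_add_eq_of_not_mem_assocPairs i hi j hj hij hij'
    refine ⟨X i * X j - X a * X b, X_mul_X_sub_mem_ker_theta hexp, 1, 1, ?_⟩
    simp only [one_smul, e]
    rw [eval_single_add_single_X_mul_X_sub hij hai haj hbi hbj]
    exact one_ne_zero
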